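/- Let c > 0, and let p, q, r, s, f₂, f₃, f₄ be real numbers with q > 0, s > 0, rq − ps > 0, and m := rq − ps + s − q > 0 (so that the four points (0,0), (1,0), (r,s), (p,q) form a strictly convex quadrilateral). Define the roughness difference D := (s/2)·(c·f₂² + (f₃ − r·f₂)²/(c·s²)) + ((rq−ps)/2)·(c·(q·f₃ − s·f₄)²/(rq−ps)² + (r·f₄ − p·f₃)²/(c·(rq−ps)²)) − (q/2)·(c·f₂² + (f₄ − p·f₂)²/(c·q²)) − (m/2)·(c·(q·(f₃−f₂) − s·(f₄−f₂))²/m² + ((r−1)·(f₄−f₂) − (p−1)·(f₃−f₂))²/(c·m²)). Then D = (q·f₃ + (ps − rq)·f₂ − s·f₄)² · (p·s·(1−p) − c²q²s + q·(c²s² + r² − r)) / (2·c·q·m·s·(rq−ps)). -/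

import Mathlib

/-- The roughness difference `D` between the triangulation `𝕋* = {(u₁',u₂',u₃'),
(u₁',u₃',u₄')}` and the triangulation `𝕋 = {(u₁',u₂',u₄'), (u₂',u₃',u₄')}` of the
convex quadrilateral `u₁' = (0,0)`, `u₂' = (1,0)`, `u₃' = (r,s)`, `u₄' = (p,q)`, for
interpolation values `0, f₂, f₃, f₄` and characteristic speed `c`. -/
noncomputable def roughnessDiff (c p q r s f₂ f₃ f₄ : ℝ) : ℝ :=
  (s / 2) * (c * f₂ ^ 2 + (f₃ - r * f₂) ^ 2 / (c * s ^ 2)) +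
    ((r * q - p * s) / 2) *
      (c * (q * f₃ - s * f₄) ^ 2 / (r * q - p * s) ^ 2 +
        (r * f₄ - p * f₃) ^ 2 / (c * (r * q - p * s) ^ 2)) -
    (q / 2) * (c * f₂ ^ 2 + (f₄ - p * f₂) ^ 2 / (c * q ^ 2)) -
    ((r * q - p * s + s - q) / 2) *
      (c * (q * (f₃ - f₂) - s * (f₄ - f₂)) ^ 2 / (r * q - p * s + s - q) ^ 2 +
        ((r - 1) * (f₄ - f₂) - (p - 1) * (f₃ - f₂)) ^ 2 /
          (c * (r * q - p * s + s - q) ^ 2))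


/-! `D` is a quadratic form in `(f₂, f₃, f₄)`. If the data are sampled from a linear function
`g`, both interpolants equal `g`, and the cross term of `D(g + e)` is
`⟨∇g, ∫ ∇ẽ* − ∫ ∇ẽ⟩_M`, where `ẽ*, ẽ` interpolate `e` on `𝕋*, 𝕋`; both integrals are boundary
integrals over the same piecewise linear trace on the quadrilateral's boundary, so they cancel.
Hence `D` is constant on the cosets of the data of linear functions, which form the kernel of
`L = q f₃ + (ps − rq) f₂ − s f₄`, and so `D = κ L²`. The coefficient `κ` comes out of clearing
the denominators of the four triangle roughnesses. -/

/-- The roughness of the linear interpolant of the values `0, g₁, g₂` at the vertices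
`(0,0), (x₁,t₁), (x₂,t₂)`: `δ/2` is the signed area, and the interpolant's gradient is
`((t₂g₁ − t₁g₂)/δ, (x₁g₂ − x₂g₁)/δ)`. -/
noncomputable def triangleRoughness (c x₁ t₁ x₂ t₂ g₁ g₂ : ℝ) : ℝ :=
  let δ := x₁ * t₂ - x₂ * t₁
  (δ / 2) * (c * ((t₂ * g₁ - t₁ * g₂) / δ) ^ 2 + ((x₁ * g₂ - x₂ * g₁) / δ) ^ 2 / c)

theorem triangleRoughness_eq_div (c x₁ t₁ x₂ t₂ g₁ g₂ : ℝ) :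
    triangleRoughness c x₁ t₁ x₂ t₂ g₁ g₂ =
      (c ^ 2 * (t₂ * g₁ - t₁ * g₂) ^ 2 + (x₁ * g₂ - x₂ * g₁) ^ 2) /
        (2 * c * (x₁ * t₂ - x₂ * t₁)) := by
  rcases eq_or_ne c 0 with rfl | hc
  · simp [triangleRoughness]
  rcases eq_or_ne (x₁ * t₂ - x₂ * t₁) 0 with hδ | hδ
  · simp [triangleRoughness, hδ]
  simp only [triangleRoughness]
  field_simp

theorem roughnessDiff_eq_triangleRoughness (c p q r s f₂ f₃ f₄ : ℝ) (hq : q ≠ 0) (hs : s ≠ 0) :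
    roughnessDiff c p q r s f₂ f₃ f₄ =
      triangleRoughness c 1 0 r s f₂ f₃ + triangleRoughness c r s p q f₃ f₄ -
        triangleRoughness c 1 0 p q f₂ f₄ -
        triangleRoughness c (r - 1) s (p - 1) q (f₃ - f₂) (f₄ - f₂) := by
  simp only [roughnessDiff, triangleRoughness, mul_zero, zero_mul, sub_zero, one_mul,
    mul_div_cancel_left₀ _ hq, mul_div_cancel_left₀ _ hs, div_pow, div_mul_eq_div_div_swap]
  ring

/-- Under strict convexity of the quadrilateral, the roughness difference factors as
`D = (q·f₃ + (ps − rq)·f₂ − s·f₄)² · (ps(1−p) − c²q²s + q(c²s² + r² − r)) /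
(2·c·q·m·s·(rq−ps))` where `m = rq − ps + s − q`. -/
theorem roughnessDiff_factorization (c p q r s f₂ f₃ f₄ : ℝ) (hc : 0 < c)
    (hq : 0 < q) (hs : 0 < s) (hrqps : 0 < r * q - p * s)
    (hm : 0 < r * q - p * s + s - q) :
    roughnessDiff c p q r s f₂ f₃ f₄ =
      (q * f₃ + (p * s - r * q) * f₂ - s * f₄) ^ 2 *
          (p * s * (1 - p) - c ^ 2 * q ^ 2 * s + q * (c ^ 2 * s ^ 2 + r ^ 2 - r)) /
        (2 * c * q * (r * q - p * s + s - q) * s * (r * q - p * s)) := by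
  have hm' : 0 < (r - 1) * q - (p - 1) * s := by linarith
  rw [roughnessDiff_eq_triangleRoughness c p q r s f₂ f₃ f₄ hq.ne' hs.ne']
  simp only [triangleRoughness_eq_div, mul_zero, sub_zero, one_mul]
  rw [div_add_div _ _ (by positivity) (by positivity),
    div_sub_div _ _ (by positivity) (by positivity),
    div_sub_div _ _ (by positivity) (by positivity),
    div_eq_div_iff (by positivity) (by positivity)]
  ring
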